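/- Let p_θ be a family of probability distributions on a finite set S parametrized smoothly by θ ∈ ℝ^d, let V ⊆ S, and let Z(θ) = ∑_{y∈V} p_θ(y) > 0. Suppose that for every y ∈ S, the sup-norm of the gradient ∇_θ log p_θ(y) is at most G. Then the sup-norm of ∇_θ log Z(θ) is at most 2G(1 − Z(θ)). -/

import Mathlib

/-!
Write `a y = ∂ᵢ p_θ(y)`. The score bound gives `|a y| ≤ G p_θ(y)`, and since the `p_θ` sum to
one, `∑_y a y = 0`. Hence `∂ᵢ Z = ∑_{y ∈ V} a y = -∑_{y ∉ V} a y` is bounded both by `G Z` and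
by `G (1 - Z)`, so by `G min(Z, 1 - Z) ≤ 2 G Z (1 - Z)`; dividing by `Z` bounds `∂ᵢ log Z`.
-/

open Finset

section Calculus

variable {E : Type*} [NormedAddCommGroup E] [NormedSpace ℝ E]

theorem abs_fderiv_apply_le_mul_of_abs_fderiv_log_apply_le {f : E → ℝ} {x v : E} {G : ℝ}
    (hf : DifferentiableAt ℝ f x) (hfx : 0 < f x)
    (hG : |fderiv ℝ (fun x => Real.log (f x)) x v| ≤ G) :
    |fderiv ℝ f x v| ≤ G * f x := by
  rw [fderiv.log hf hfx.ne', _root_.smul_apply, smul_eq_mul, abs_mul,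
    abs_inv, abs_of_pos hfx, inv_mul_le_iff₀ hfx, mul_comm] at hG
  exact hG

theorem sum_fderiv_apply_eq_zero_of_sum_const {ι : Type*} [Fintype ι] {f : E → ι → ℝ} {c : ℝ}
    {x : E} (hf : ∀ y, DifferentiableAt ℝ (fun x => f x y) x) (hsum : ∀ x, ∑ y, f x y = c)
    (v : E) :
    ∑ y, fderiv ℝ (fun x => f x y) x v = 0 := by
  have hconst : (fun x => ∑ y, f x y) = fun _ => c := funext hsum
  rw [← _root_.sum_apply,
    ← fderiv_fun_sum (u := univ) (A := fun y x => f x y) fun y _ => hf y, hconst,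
    fderiv_fun_const]
  rfl

end Calculus

theorem abs_sum_le_mul_sum_of_abs_le_mul {ι : Type*} (s : Finset ι) {a p : ι → ℝ} {G : ℝ}
    (h : ∀ y, |a y| ≤ G * p y) :
    |∑ y ∈ s, a y| ≤ G * ∑ y ∈ s, p y :=
  calc |∑ y ∈ s, a y| ≤ ∑ y ∈ s, |a y| := abs_sum_le_sum_abs _ _
    _ ≤ ∑ y ∈ s, G * p y := sum_le_sum fun y _ => h y
    _ = G * ∑ y ∈ s, p y := (mul_sum _ _ _).symm

theorem abs_sum_le_two_mul_mul_one_sub {ι : Type*} [Fintype ι] [DecidableEq ι] {a p : ι → ℝ}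
    {G : ℝ} (ha : ∑ y, a y = 0) (hp : ∑ y, p y = 1) (h : ∀ y, |a y| ≤ G * p y) (V : Finset ι) :
    |∑ y ∈ V, a y| ≤ 2 * G * (∑ y ∈ V, p y) * (1 - ∑ y ∈ V, p y) := by
  have hin := abs_sum_le_mul_sum_of_abs_le_mul V h
  have hout := abs_sum_le_mul_sum_of_abs_le_mul Vᶜ h
  rw [← sum_add_sum_compl V, add_eq_zero_iff_eq_neg] at ha
  rw [← sum_add_sum_compl V, ← eq_sub_iff_add_eq'] at hp
  rw [hp] at hout
  rw [ha, abs_neg] at hin ⊢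
  set A := |∑ y ∈ Vᶜ, a y|
  set Z := ∑ y ∈ V, p y
  have hA : 0 ≤ A := abs_nonneg _
  rcases le_total Z (1 / 2) with hZ | hZ
  · nlinarith
  · nlinarith

/-- Bound on the gradient of the log partition function: if the score vectors are
bounded by `G` in sup-norm (componentwise), then `‖∇ log Z(θ)‖_∞ ≤ 2G(1 - Z(θ))`. -/
theorem stmt_1 {S : Type*} [Fintype S] {d : ℕ}
    (p : (Fin d → ℝ) → S → ℝ)
    (hpos : ∀ θ y, 0 < p θ y) (hsum : ∀ θ, ∑ y, p θ y = 1)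
    (hdiff : ∀ θ y, DifferentiableAt ℝ (fun θ' => p θ' y) θ)
    (V : Finset S) (θ : Fin d → ℝ)
    (hZpos : 0 < ∑ y ∈ V, p θ y)
    (G : ℝ)
    (hG : ∀ y i, |fderiv ℝ (fun θ' => Real.log (p θ' y)) θ (Pi.single i 1)| ≤ G) :
    ∀ i, |fderiv ℝ (fun θ' => Real.log (∑ y ∈ V, p θ' y)) θ (Pi.single i 1)|
      ≤ 2 * G * (1 - ∑ y ∈ V, p θ y) := by
  classical
  intro i
  set a : S → ℝ := fun y => fderiv ℝ (fun θ' => p θ' y) θ (Pi.single i 1)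
  have hscore (y : S) : |a y| ≤ G * p θ y :=
    abs_fderiv_apply_le_mul_of_abs_fderiv_log_apply_le (hdiff θ y) (hpos θ y) (hG y i)
  have hZ : fderiv ℝ (fun θ' => ∑ y ∈ V, p θ' y) θ (Pi.single i 1) = ∑ y ∈ V, a y := by
    rw [fderiv_fun_sum fun y _ => hdiff θ y, _root_.sum_apply]
  have hbound := abs_sum_le_two_mul_mul_one_sub
    (sum_fderiv_apply_eq_zero_of_sum_const (hdiff θ) hsum (Pi.single i 1)) (hsum θ) hscore V
  rw [fderiv.log (DifferentiableAt.fun_sum fun y _ => hdiff θ y) hZpos.ne',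
    _root_.smul_apply, hZ, smul_eq_mul, abs_mul, abs_inv, abs_of_pos hZpos,
    inv_mul_le_iff₀ hZpos]
  linarith
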